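/- arXiv:2509.06363 — 3 statements merged into one kernel-verified Lean document; each statement's English description precedes it below -/
import Mathlib

section
/- Let m ≥ 3 be odd. The number of orbits of the action of the dihedral group D_m on {1,-1}^m equals (1/(2m)) · (2^m + 2·Σ_{i=1}^{(m-1)/2} 2^{gcd(i,m)}). -/
/-- The action of the dihedral group `D_m` on `{1,-1}^m` (tuples indexed by `ZMod m`,
with position `i ∈ {1,…,m}` identified with `(i : ZMod m)`), where the rotation
`r = r 1` acts by `r(δ₁,…,δₘ) = (δₘ, δ₁, …, δ_{m-1})` and the reflection `f = sr 0`
acts by `f(δ₁,…,δₘ) = (-δₘ, …, -δ₂, -δ₁)`, i.e. `f(δ)ᵢ = -δ_{m+1-i}`. -/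
def dact {m : ℕ} : DihedralGroup m → (ZMod m → ℤˣ) → (ZMod m → ℤˣ)
  | .r i, δ => fun j => δ (j - i)
  | .sr i, δ => fun j => -δ (1 - i - j)

/-- The orbit of `δ` under the action of the dihedral group on `{1,-1}^m`. -/
def dihedralOrbit {m : ℕ} (δ : ZMod m → ℤˣ) : Set (ZMod m → ℤˣ) :=
  {δ' | ∃ σ : DihedralGroup m, dact σ δ = δ'}

/-!
By Burnside's lemma the number of orbits is the average number of fixed points. The rotation
`r i` fixes exactly the sign vectors of period `i`, i.e. the functions on `ZMod m ⧸ ⟨i⟩`, a group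
of order `gcd(i, m)`. For odd `m`, `2` is invertible in `ZMod m`, so every reflection
`j ↦ 1 - i - j` fixes some position `j`; a vector fixed by it would satisfy `δ j = -δ j`, so
reflections fix nothing. Finally `gcd(m - i, m) = gcd(i, m)` folds the sum over `ZMod m` onto
`1 ≤ i ≤ (m - 1) / 2`.
-/

open Finset MulAction Function DihedralGroup

lemma MulAction.ncard_range_orbit (G α : Type*) [Group G] [MulAction G α] :
    (Set.range (orbit G : α → Set α)).ncard = Nat.card (orbitRel.Quotient G α) := by
  rw [← Set.ncard_range_of_injective orbitRel.Quotient.orbit_injective]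
  congr 1
  ext s
  constructor
  · rintro ⟨x, rfl⟩
    exact ⟨⟦x⟧, rfl⟩
  · rintro ⟨q, rfl⟩
    induction q using Quotient.inductionOn with | h x => exact ⟨x, rfl⟩

def Function.periodicEquiv {α β : Type*} [AddGroup α] (c : α) :
    {f : α → β // Periodic f c} ≃ (α ⧸ AddSubgroup.zmultiples c → β) where
  toFun f := f.2.lift
  invFun g := ⟨g ∘ (↑), fun a => by simp⟩
  left_inv _ := rfl
  right_inv g := funext fun q => by induction q using QuotientAddGroup.induction_on; rfl

lemma ZMod.index_zmultiples {m : ℕ} [NeZero m] (i : ZMod m) :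
    (AddSubgroup.zmultiples i).index = m.gcd i.val := by
  have hord : addOrderOf i = m / m.gcd i.val := by
    simpa using ZMod.addOrderOf_coe i.val (NeZero.ne m)
  have h := (AddSubgroup.zmultiples i).card_mul_index
  rw [Nat.card_zmultiples, hord, Nat.card_zmod] at h
  rw [← Nat.div_div_self (Nat.gcd_dvd_left m i.val) (NeZero.ne m)]
  refine Nat.eq_div_of_mul_eq_right (Nat.div_pos ?_ ?_).ne' h
  exacts [Nat.gcd_le_left _ (NeZero.pos m), Nat.gcd_pos_of_pos_left _ (NeZero.pos m)]

lemma ZMod.sum_comp_val {M : Type*} [AddCommMonoid M] {m : ℕ} [NeZero m] (f : ℕ → M) :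
    ∑ i : ZMod m, f i.val = ∑ j ∈ range m, f j := by
  obtain ⟨n, rfl⟩ := Nat.exists_eq_succ_of_ne_zero (NeZero.ne m)
  exact Fin.sum_univ_eq_sum_range f _

lemma Finset.sum_range_two_mul_add_one_of_symm {M : Type*} [AddCommMonoid M] (f : ℕ → M)
    (k : ℕ) (hf : ∀ j ∈ Icc 1 k, f (2 * k + 1 - j) = f j) :
    ∑ j ∈ range (2 * k + 1), f j = f 0 + 2 • ∑ j ∈ Icc 1 k, f j := by
  rw [← Ico_add_one_right_eq_Icc] at hf ⊢
  have hreflect : ∑ j ∈ Ico (k + 1) (2 * k + 1), f j = ∑ j ∈ Ico 1 (k + 1), f j := by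
    rw [← sum_congr rfl hf, sum_Ico_reflect f 1 (by omega)]
    congr 2; omega
  rw [range_eq_Ico, ← sum_Ico_consecutive f (Nat.zero_le 1) (by omega : 1 ≤ 2 * k + 1),
    ← sum_Ico_consecutive f (by omega : 1 ≤ k + 1) (by omega : k + 1 ≤ 2 * k + 1), hreflect,
    two_nsmul]
  simp

instance dihedralMulAction {m : ℕ} : MulAction (DihedralGroup m) (ZMod m → ℤˣ) where
  smul := dact
  one_smul δ := funext fun j => by simp [← r_zero, HSMul.hSMul, dact]
  mul_smul g h δ := by
    rcases g with i | i <;> rcases h with j | j <;> funext k <;>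
      simp only [HSMul.hSMul, r_mul_r, r_mul_sr, sr_mul_r, sr_mul_sr, dact, neg_neg] <;> ring_nf

lemma dihedralOrbit_eq_orbit {m : ℕ} : dihedralOrbit (m := m) = orbit (DihedralGroup m) := rfl

namespace DihedralGroup

variable {m : ℕ}

@[simp]
lemma r_smul_apply (i j : ZMod m) (δ : ZMod m → ℤˣ) : (r i • δ) j = δ (j - i) := rfl

@[simp]
lemma sr_smul_apply (i j : ZMod m) (δ : ZMod m → ℤˣ) : (sr i • δ) j = -δ (1 - i - j) := rfl

lemma mem_fixedBy_r_iff (i : ZMod m) (δ : ZMod m → ℤˣ) :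
    δ ∈ fixedBy (ZMod m → ℤˣ) (r i) ↔ Periodic δ i := by
  rw [mem_fixedBy, funext_iff, ← (Equiv.addRight i).forall_congr_right]
  simp [Periodic, eq_comm]

lemma card_fixedBy_r [NeZero m] (i : ZMod m) :
    Nat.card (fixedBy (ZMod m → ℤˣ) (r i)) = 2 ^ m.gcd i.val := by
  rw [Nat.card_congr ((Equiv.subtypeEquivRight (mem_fixedBy_r_iff i)).trans (periodicEquiv i)),
    Nat.card_fun, ← AddSubgroup.index, ZMod.index_zmultiples]
  simp

lemma fixedBy_sr_eq_empty (hodd : Odd m) (i : ZMod m) :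
    fixedBy (ZMod m → ℤˣ) (sr i) = ∅ := by
  set u := ZMod.unitOfCoprime 2 (Nat.coprime_two_left.mpr hodd)
  set j : ZMod m := ↑u⁻¹ * (1 - i)
  have hj : 1 - i - j = j := by
    have : (2 : ZMod m) * j = 1 - i := by
      rw [show (2 : ZMod m) = u by simp [u], Units.mul_inv_cancel_left]
    linear_combination -this
  refine Set.eq_empty_iff_forall_notMem.mpr fun δ hδ => neg_units_ne_self (δ j) ?_
  simpa [hj] using congrFun hδ j

lemma sum_card_fixedBy [NeZero m] (hodd : Odd m)
    [∀ g : DihedralGroup m, Fintype (fixedBy (ZMod m → ℤˣ) g)] :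
    ∑ g : DihedralGroup m, Fintype.card (fixedBy (ZMod m → ℤˣ) g) =
      ∑ i : ZMod m, 2 ^ m.gcd i.val := by
  rw [← equivSum.symm.sum_comp, Fintype.sum_sum_type]
  simp only [← Nat.card_eq_fintype_card, equivSum_symm_apply, card_fixedBy_r,
    fixedBy_sr_eq_empty hodd]
  simp

end DihedralGroup

lemma sum_two_pow_gcd_val {m : ℕ} [NeZero m] (hodd : Odd m) :
    ∑ i : ZMod m, 2 ^ m.gcd i.val = 2 ^ m + 2 * ∑ i ∈ Icc 1 ((m - 1) / 2), 2 ^ i.gcd m := by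
  obtain ⟨k, rfl⟩ := hodd
  rw [ZMod.sum_comp_val (fun j => 2 ^ (2 * k + 1).gcd j),
    sum_range_two_mul_add_one_of_symm _ k fun j hj => by
      rw [Nat.gcd_self_sub_right (by simp at hj; omega)]]
  simp [Nat.gcd_comm]

theorem orbit_count_odd_general (m : ℕ) (hodd : Odd m) :
    (Set.ncard (Set.range (dihedralOrbit (m := m))) : ℚ) =
      (1 / (2 * m)) *
        (2 ^ m + 2 * ∑ i ∈ Finset.Icc 1 ((m - 1) / 2), (2 : ℚ) ^ Nat.gcd i m) := by
  have : NeZero m := ⟨hodd.pos.ne'⟩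
  classical
  have burnside := sum_card_fixedBy_eq_card_orbits_mul_card_group (DihedralGroup m) (ZMod m → ℤˣ)
  rw [sum_card_fixedBy hodd, sum_two_pow_gcd_val hodd, DihedralGroup.card] at burnside
  rw [dihedralOrbit_eq_orbit, ncard_range_orbit, Nat.card_eq_fintype_card,
    one_div_mul_eq_div, eq_div_iff (by simp [NeZero.ne m])]
  exact_mod_cast burnside.symm

/-- For odd `m ≥ 3`, the number of orbits of the dihedral action on `{1,-1}^m` equals
`(1/(2m)) · (2^m + 2·Σ_{i=1}^{(m-1)/2} 2^{gcd(i,m)})`. -/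
theorem orbit_count_odd (m : ℕ) (hm : 3 ≤ m) (hodd : Odd m) :
    (Set.ncard (Set.range (dihedralOrbit (m := m))) : ℚ) =
      (1 / (2 * m)) *
        (2 ^ m + 2 * ∑ i ∈ Finset.Icc 1 ((m - 1) / 2), (2 : ℚ) ^ Nat.gcd i m) :=
  orbit_count_odd_general m hodd
end

section
/- Let m ≥ 1 and k ≥ 2. If Γ ⊆ D_m is a reversal-closed subset for δ ∈ {1,-1}^m, then the preimage π^{-1}(Γ) ⊆ D_{km} is a reversal-closed subset for the k-fold concatenation k(δ) ∈ {1,-1}^{km}. -/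
/-- `Γ ⊆ D_m` is reversal-closed for `δ ∈ {1,-1}^m` if for all `σ₁, σ₂ ∈ Γ` there
exists `σ₃ ∈ Γ` with `δ · σ₁(δ) · σ₂(δ) = σ₃(δ)`. -/
def ReversalClosed {m : ℕ} (Γ : Set (DihedralGroup m)) (δ : ZMod m → ℤˣ) : Prop :=
  ∀ σ₁ ∈ Γ, ∀ σ₂ ∈ Γ, ∃ σ₃ ∈ Γ, δ * dact σ₁ δ * dact σ₂ δ = dact σ₃ δ

/-- The group homomorphism `π : D_{km} → D_m` determined by `π(r) = r`, `π(f) = f`. -/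
def dihedralProj {m k : ℕ} : DihedralGroup (k * m) → DihedralGroup m
  | .r i => .r (ZMod.castHom (dvd_mul_left m k) (ZMod m) i)
  | .sr i => .sr (ZMod.castHom (dvd_mul_left m k) (ZMod m) i)

/-- The group homomorphism `ι : D_m → D_{km}` determined by `ι(r) = r^k`, `ι(f) = f`. -/
def dihedralIncl {m : ℕ} (k : ℕ) : DihedralGroup m → DihedralGroup (k * m)
  | .r i => .r ((k * i.val : ℕ) : ZMod (k * m))
  | .sr i => .sr ((k * i.val : ℕ) : ZMod (k * m))

/-- `k(δ) ∈ {1,-1}^{km}`: the concatenation of `k` copies of `δ ∈ {1,-1}^m`. -/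
def concatTuple {m : ℕ} (k : ℕ) (δ : ZMod m → ℤˣ) : ZMod (k * m) → ℤˣ :=
  fun j => δ (ZMod.castHom (dvd_mul_left m k) (ZMod m) j)

/-- `δ(k) ∈ {1,-1}^{km}`: the tuple in which each entry of `δ ∈ {1,-1}^m` is repeated
`k` times in place (position `p ∈ {1,…,km}` carries the value `δ_{⌈p/k⌉}`). -/
def repeatTuple {m : ℕ} (k : ℕ) (δ : ZMod m → ℤˣ) : ZMod (k * m) → ℤˣ :=
  fun j => δ ((((j - 1).val / k : ℕ) : ZMod m) + 1)

/-! Concatenation `δ ↦ k(δ)` is multiplicative and intertwines the action of `σ ∈ D_{km}` on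
`{1,-1}^{km}` with the action of `π σ` on `{1,-1}^m`. Since `π` is surjective, the witness
`σ₃ ∈ Γ` for `π σ₁, π σ₂` lifts to a witness in `π⁻¹(Γ)` for `σ₁, σ₂`. -/

theorem ReversalClosed.preimage {m n : ℕ} {Γ : Set (DihedralGroup m)} {δ : ZMod m → ℤˣ}
    (hΓ : ReversalClosed Γ δ) {p : DihedralGroup n → DihedralGroup m}
    (hp : Function.Surjective p) {c : (ZMod m → ℤˣ) → (ZMod n → ℤˣ)}
    (hc_mul : ∀ x y, c (x * y) = c x * c y) (hc_dact : ∀ σ, dact σ (c δ) = c (dact (p σ) δ)) :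
    ReversalClosed (p ⁻¹' Γ) (c δ) := by
  intro σ₁ h₁ σ₂ h₂
  obtain ⟨τ₃, hτ₃, heq⟩ := hΓ _ h₁ _ h₂
  obtain ⟨σ₃, rfl⟩ := hp τ₃
  exact ⟨σ₃, hτ₃, by rw [hc_dact, hc_dact, hc_dact, ← heq, hc_mul, hc_mul]⟩

theorem dihedralProj_surjective {m k : ℕ} :
    Function.Surjective (dihedralProj : DihedralGroup (k * m) → DihedralGroup m) := by
  have hcast := ZMod.ringHom_surjective (ZMod.castHom (dvd_mul_left m k) (ZMod m))
  rintro (i | i) <;> obtain ⟨j, rfl⟩ := hcast i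
  exacts [⟨.r j, rfl⟩, ⟨.sr j, rfl⟩]

theorem concatTuple_mul {m : ℕ} (k : ℕ) (x y : ZMod m → ℤˣ) :
    concatTuple k (x * y) = concatTuple k x * concatTuple k y :=
  rfl

theorem dact_concatTuple {m k : ℕ} (σ : DihedralGroup (k * m)) (δ : ZMod m → ℤˣ) :
    dact σ (concatTuple k δ) = concatTuple k (dact (dihedralProj σ) δ) := by
  cases σ <;> funext j <;> simp [dact, concatTuple, dihedralProj, map_sub]

theorem preimage_reversal_closed_concat_general {m k : ℕ}
    (δ : ZMod m → ℤˣ) (Γ : Set (DihedralGroup m)) (hΓ : ReversalClosed Γ δ) :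
    ReversalClosed (dihedralProj ⁻¹' Γ) (concatTuple k δ) :=
  hΓ.preimage dihedralProj_surjective (concatTuple_mul k) (fun σ => dact_concatTuple σ δ)

/-- If `Γ ⊆ D_m` is reversal-closed for `δ ∈ {1,-1}^m`, then `π⁻¹(Γ) ⊆ D_{km}` is
reversal-closed for the `k`-fold concatenation `k(δ) ∈ {1,-1}^{km}`. -/
theorem preimage_reversal_closed_concat {m k : ℕ} (hm : 1 ≤ m) (hk : 2 ≤ k)
    (δ : ZMod m → ℤˣ) (Γ : Set (DihedralGroup m)) (hΓ : ReversalClosed Γ δ) :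
    ReversalClosed (dihedralProj ⁻¹' Γ) (concatTuple k δ) :=
  preimage_reversal_closed_concat_general δ Γ hΓ
end

section
/- Let m ≥ 1 and k ≥ 2. If Γ ⊆ D_m is a reversal-closed subset for δ ∈ {1,-1}^m, then the image ι(Γ) ⊆ D_{km} is a reversal-closed subset for δ(k) ∈ {1,-1}^{km}, the tuple obtained by repeating each entry of δ k times in place. -/
/-! Let `b(x) = ⌊x / k⌋ ∈ ℤ/m` be the block of `x ∈ ℤ/km`, so that `δ(k)ⱼ = δ_{b(j-1)+1}`.
Translating by `k·i` shifts blocks by `i`, and `x ↦ -1 - x` reverses them: `b(-1 - x) = -1 - b(x)`.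
Hence `ι` intertwines the two actions, `ι(σ)(δ(k)) = (σ δ)(k)`, and since `δ ↦ δ(k)` is
multiplicative, the identity `δ · σ₁(δ) · σ₂(δ) = σ₃(δ)` transports to the images. -/

lemma ReversalClosed.image {m n : ℕ} {Γ : Set (DihedralGroup m)} {δ : ZMod m → ℤˣ}
    (hΓ : ReversalClosed Γ δ) (φ : DihedralGroup m → DihedralGroup n)
    (T : (ZMod m → ℤˣ) → (ZMod n → ℤˣ)) (hT : ∀ ε ε', T (ε * ε') = T ε * T ε')
    (hφ : ∀ σ, dact (φ σ) (T δ) = T (dact σ δ)) :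
    ReversalClosed (φ '' Γ) (T δ) := by
  rintro _ ⟨σ₁, h₁, rfl⟩ _ ⟨σ₂, h₂, rfl⟩
  obtain ⟨σ₃, h₃, hσ₃⟩ := hΓ σ₁ h₁ σ₂ h₂
  exact ⟨φ σ₃, Set.mem_image_of_mem φ h₃, by rw [hφ, hφ, hφ, ← hσ₃, hT, hT]⟩

def blockIndex {m : ℕ} (k : ℕ) (x : ZMod (k * m)) : ZMod m := ((x.val / k : ℕ) : ZMod m)

lemma repeatTuple_apply {m : ℕ} (k : ℕ) (δ : ZMod m → ℤˣ) (j : ZMod (k * m)) :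
    repeatTuple k δ j = δ (blockIndex k (j - 1) + 1) :=
  rfl

lemma blockIndex_natCast {m : ℕ} (k a : ℕ) :
    blockIndex k (a : ZMod (k * m)) = ((a / k : ℕ) : ZMod m) := by
  rw [blockIndex, ZMod.val_natCast, Nat.mod_mul_right_div_self, ZMod.natCast_mod]

section

variable {m k : ℕ} [NeZero (k * m)]

lemma blockIndex_add_mul (x : ZMod (k * m)) (n : ℕ) :
    blockIndex k (x + ((k * n : ℕ) : ZMod (k * m))) = blockIndex k x + n := by
  have hk : 0 < k := Nat.pos_of_mul_pos_right (Nat.pos_of_ne_zero (NeZero.ne (k * m)))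
  rw [← ZMod.natCast_zmod_val x, ← Nat.cast_add, blockIndex_natCast, Nat.add_mul_div_left _ _ hk,
    Nat.cast_add, blockIndex, ZMod.val_natCast_of_lt (ZMod.val_lt x)]

lemma blockIndex_sub_mul_val (x : ZMod (k * m)) (i : ZMod m) :
    blockIndex k (x - ((k * i.val : ℕ) : ZMod (k * m))) = blockIndex k x - i := by
  have hm : NeZero m := ⟨right_ne_zero_of_mul (NeZero.ne (k * m))⟩
  have h := blockIndex_add_mul (x - ((k * i.val : ℕ) : ZMod (k * m))) i.val
  rw [sub_add_cancel, ZMod.natCast_zmod_val] at h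
  exact eq_sub_of_add_eq h.symm

lemma blockIndex_neg_one_sub (x : ZMod (k * m)) :
    blockIndex k (-1 - x) = -1 - blockIndex k x := by
  have hk : 0 < k := Nat.pos_of_mul_pos_right (Nat.pos_of_ne_zero (NeZero.ne (k * m)))
  have hx := ZMod.val_lt x
  obtain ⟨q, s, hs, hxqs⟩ : ∃ q s, s < k ∧ x.val = k * q + s :=
    ⟨x.val / k, x.val % k, Nat.mod_lt _ hk, (Nat.div_add_mod _ _).symm⟩
  have hqm : q < m := Nat.lt_of_mul_lt_mul_left (a := k) (by omega)
  have hrev : -1 - x = ((k * (m - 1 - q) + (k - 1 - s) : ℕ) : ZMod (k * m)) := by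
    have hblocks : k * (m - 1 - q) + k * q + k = k * m := by
      rw [← Nat.mul_add, ← Nat.mul_succ]; congr 1; omega
    have hsum : ((k * (m - 1 - q) + (k - 1 - s) + x.val + 1 : ℕ) : ZMod (k * m)) = 0 := by
      rw [show k * (m - 1 - q) + (k - 1 - s) + x.val + 1 = k * m by omega, ZMod.natCast_self]
    push_cast [ZMod.natCast_zmod_val] at hsum ⊢
    linear_combination -hsum
  rw [hrev, blockIndex_natCast, Nat.mul_add_div hk, Nat.div_eq_of_lt (by omega), add_zero,
    blockIndex, hxqs, Nat.mul_add_div hk, Nat.div_eq_of_lt hs, add_zero]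
  rw [show m - 1 - q = m - (1 + q) by omega, Nat.cast_sub (by omega), ZMod.natCast_self]
  push_cast
  ring

lemma dact_dihedralIncl_repeatTuple (σ : DihedralGroup m) (δ : ZMod m → ℤˣ) :
    dact (dihedralIncl k σ) (repeatTuple k δ) = repeatTuple k (dact σ δ) := by
  funext j
  cases σ with
  | r i =>
    simp only [dihedralIncl, dact, repeatTuple_apply]
    rw [sub_right_comm, blockIndex_sub_mul_val]
    congr 1; ring
  | sr i =>
    simp only [dihedralIncl, dact, repeatTuple_apply]
    rw [show (1 : ZMod (k * m)) - ((k * i.val : ℕ) : ZMod (k * m)) - j - 1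
        = -1 - (j - 1) - ((k * i.val : ℕ) : ZMod (k * m)) by ring,
      blockIndex_sub_mul_val, blockIndex_neg_one_sub]
    congr 2; ring

end

/-- If `Γ ⊆ D_m` is reversal-closed for `δ ∈ {1,-1}^m`, then the image
`ι(Γ) ⊆ D_{km}` is reversal-closed for `δ(k) ∈ {1,-1}^{km}`. -/
theorem image_reversal_closed_repeat {m k : ℕ} (hm : 1 ≤ m) (hk : 2 ≤ k)
    (δ : ZMod m → ℤˣ) (Γ : Set (DihedralGroup m)) (hΓ : ReversalClosed Γ δ) :
    ReversalClosed (dihedralIncl k '' Γ) (repeatTuple k δ) := by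
  have : NeZero (k * m) := ⟨Nat.mul_ne_zero (by omega) (by omega)⟩
  exact hΓ.image (dihedralIncl k) (repeatTuple k) (fun _ _ => rfl)
    (fun σ => dact_dihedralIncl_repeatTuple σ δ)
end
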